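/- arXiv:2110.01732 — 9 statements merged into one kernel-verified Lean document; each statement's English description precedes it below -/
import Mathlib

section
/- Let A' ∈ ℚ^{(n+1)×n} with rank(A') = n and with no zero row, let b' ∈ ℚ^{n+1}, and let d_1 < d_2 < … < d_{n+1} be natural numbers. For ε ∈ ℝ, let M(ε) be the (n+1)×(n+1) matrix whose first n columns are the columns of A' and whose last column is b' + (ε^{d_1}, …, ε^{d_{n+1}})^⊤. Then the set {ε ∈ ℝ : det(M(ε)) = 0} is finite. -/
/-!
Expanding along the last column, `det M(ε) = ∑ i, (b'ᵢ + ε ^ dᵢ) cᵢ`, where `c` is the vector of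
signed maximal minors of `A'`. Since `A'` has rank `n`, some `det (A' | v)` is nonzero, so `c ≠ 0`;
and `c A' = 0`, because `(A' | A'ⱼ)` has two equal columns. Were `c` supported on the first row
alone, that row of `A'` would vanish. Hence `cᵢ ≠ 0` for some `i ≠ 0`, where `dᵢ > 0`, and since the
exponents are distinct, `cᵢ` is the coefficient of `X ^ dᵢ` in a polynomial whose roots are the
zeros of `ε ↦ det M(ε)`.
-/

open Matrix Polynomial

def appendCol {α : Type*} {n : ℕ} (A : Matrix (Fin (n + 1)) (Fin n) α) (v : Fin (n + 1) → α) :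
    Matrix (Fin (n + 1)) (Fin (n + 1)) α :=
  of fun i => Fin.snoc (A i) (v i)

theorem col_appendCol {α : Type*} {n : ℕ} (A : Matrix (Fin (n + 1)) (Fin n) α)
    (v : Fin (n + 1) → α) : (appendCol A v).col = Fin.snoc A.col v := by
  funext j i
  induction j using Fin.lastCases with
  | last => rw [Fin.snoc_last]; simp [appendCol]
  | cast j => rw [Fin.snoc_castSucc]; simp [appendCol]

section Cofactor

variable {R : Type*} [CommRing R] {n : ℕ}

def cofactorLast (A : Matrix (Fin (n + 1)) (Fin n) R) (i : Fin (n + 1)) : R :=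
  (-1) ^ (i + n : ℕ) * (A.submatrix i.succAbove id).det

theorem det_appendCol (A : Matrix (Fin (n + 1)) (Fin n) R) (v : Fin (n + 1) → R) :
    (appendCol A v).det = ∑ i, v i * cofactorLast A i := by
  have hminor (i : Fin (n + 1)) :
      (appendCol A v).submatrix i.succAbove (Fin.last n).succAbove = A.submatrix i.succAbove id := by
    ext k l
    simp [appendCol]
  rw [det_succ_column _ (Fin.last n)]
  refine Finset.sum_congr rfl fun i _ => ?_
  rw [hminor, cofactorLast, Fin.val_last]
  simp only [appendCol, of_apply, Fin.snoc_last]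
  ring

theorem cofactorLast_map {S : Type*} [CommRing S] (f : R →+* S)
    (A : Matrix (Fin (n + 1)) (Fin n) R) (i : Fin (n + 1)) :
    cofactorLast (A.map f) i = f (cofactorLast A i) := by
  rw [cofactorLast, cofactorLast, map_mul, map_pow, map_neg, map_one, RingHom.map_det]
  rfl

theorem cofactorLast_vecMul_self (A : Matrix (Fin (n + 1)) (Fin n) R) :
    cofactorLast A ᵥ* A = 0 := by
  ext j
  have hrep : (appendCol A fun i => A i j).det = 0 :=
    det_zero_of_column_eq (Fin.castSucc_lt_last j).ne fun i => by simp [appendCol]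
  rw [det_appendCol] at hrep
  simpa [vecMul, dotProduct, mul_comm] using hrep

end Cofactor

theorem cofactorLast_ne_zero {K : Type*} [Field K] {n : ℕ} {A : Matrix (Fin (n + 1)) (Fin n) K}
    (hA : LinearIndependent K A.col) : cofactorLast A ≠ 0 := by
  have hspan : Submodule.span K (Set.range A.col) ≠ ⊤ := fun h => by
    have := finrank_range_le_card (R := K) A.col
    rw [Set.finrank, h, finrank_top, Module.finrank_fin_fun, Fintype.card_fin] at this
    omega
  obtain ⟨v, -, hv⟩ := SetLike.exists_of_lt hspan.lt_top
  have hunit : IsUnit (appendCol A v) := by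
    rw [← linearIndependent_cols_iff_isUnit, col_appendCol]
    exact linearIndependent_finSnoc.2 ⟨hA, hv⟩
  intro h
  apply ((isUnit_iff_isUnit_det _).1 hunit).ne_zero
  simp [det_appendCol, h]

theorem exists_ne_ne_zero_of_vecMul_eq_zero {R m n : Type*} [Ring R] [NoZeroDivisors R]
    [Fintype m] [DecidableEq m] {A : Matrix m n R} {c : m → R} {i₀ : m}
    (hc : c ≠ 0) (hcA : c ᵥ* A = 0) (hA : A i₀ ≠ 0) : ∃ i ≠ i₀, c i ≠ 0 := by
  by_contra! h
  have hsingle : c = Pi.single i₀ (c i₀) := by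
    ext i
    rcases eq_or_ne i i₀ with rfl | hi
    · simp
    · simp [h i hi, hi]
  rw [hsingle, single_vecMul, smul_eq_zero] at hcA
  exact hcA.elim (fun h0 => hc (by rw [hsingle, h0, Pi.single_zero])) hA

theorem finite_setOf_sum_mul_add_pow_eq_zero {K ι : Type*} [CommRing K] [IsDomain K] [Fintype ι]
    (b c : ι → K) {d : ι → ℕ} (hd : Function.Injective d) {i₀ : ι} (hc : c i₀ ≠ 0)
    (hd₀ : d i₀ ≠ 0) : {x : K | ∑ i, (b i + x ^ d i) * c i = 0}.Finite := by
  set P : K[X] := ∑ i, (C (b i) + X ^ d i) * C (c i)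
  have hcoeff : P.coeff (d i₀) = c i₀ := by
    simp only [P, finsetSum_coeff, coeff_mul_C, coeff_add, coeff_C, hd₀, ↓reduceIte, coeff_X_pow,
      zero_add, ite_mul, one_mul, zero_mul]
    rw [Finset.sum_eq_single i₀ (fun i _ hi => if_neg (hd.ne hi.symm)) (by simp), if_pos rfl]
  have hP : P ≠ 0 := fun h => hc (by rw [← hcoeff, h, coeff_zero])
  refine (finite_setOfPred_isRoot hP).subset fun x hx => ?_
  simpa [P, eval_finsetSum] using hx

/-- For `A' ∈ ℚ^{(n+1)×n}` of rank `n` with no zero row, `b' ∈ ℚ^{n+1}` and strictly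
increasing natural exponents `d_1 < … < d_{n+1}`, the matrix `M(ε)` whose first `n` columns
are those of `A'` and whose last column is `b' + (ε^{d_1}, …, ε^{d_{n+1}})ᵀ` has a
determinant that vanishes for only finitely many real `ε`. -/
theorem det_perturbed_matrix_finitely_many_roots
    (n : ℕ) (A' : Matrix (Fin (n + 1)) (Fin n) ℚ) (b' : Fin (n + 1) → ℚ)
    (hrank : A'.rank = n)
    (hrow : ∀ i : Fin (n + 1), A' i ≠ 0)
    (d : Fin (n + 1) → ℕ) (hd : StrictMono d) :
    {ε : ℝ |
      (Matrix.of fun i j : Fin (n + 1) =>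
        if h : (j : ℕ) < n then ((A' i ⟨j, h⟩ : ℚ) : ℝ)
        else ((b' i : ℚ) : ℝ) + ε ^ (d i)).det = 0}.Finite := by
  have hcols : LinearIndependent ℚ A'.col := by
    rw [linearIndependent_iff_card_eq_finrank_span, Set.finrank, ← rank_eq_finrank_span_cols,
      hrank, Fintype.card_fin]
  obtain ⟨i, hi0, hi⟩ := exists_ne_ne_zero_of_vecMul_eq_zero (cofactorLast_ne_zero hcols)
    (cofactorLast_vecMul_self A') (hrow 0)
  have hdi : d i ≠ 0 := (hd (Fin.pos_of_ne_zero hi0)).ne_bot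
  convert finite_setOf_sum_mul_add_pow_eq_zero (fun i => (b' i : ℝ))
    (fun i => ((cofactorLast A' i : ℚ) : ℝ)) hd.injective (i₀ := i) (by exact_mod_cast hi) hdi
    using 3 with ε
  change (appendCol (A'.map (Rat.castHom ℝ)) fun i => (b' i : ℝ) + ε ^ d i).det = 0 ↔ _
  simp_rw [det_appendCol, cofactorLast_map]
  rfl
end

section
/- Let A ∈ ℝ^{(n+m)×n} and b ∈ ℝ^{n+m}. Then the polyhedron 𝒫(A,b) has at most binom(n+m, n) vertices; that is, the set of extreme points of {x ∈ ℝ^n : A x ≤ b} has cardinality at most binom(n+m, n). -/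
/-! At a vertex `x` of `{x | A x ≤ b}` the rows of `A` active at `x` span the whole space:
otherwise some `d ≠ 0` is orthogonal to all of them, both `x + t d` and `x - t d` stay feasible
for small `t`, and `x` is their midpoint. Picking a basis among the active rows gives a set `J`
of exactly `n` rows for which `A_J x = b_J` determines `x`, so `x ↦ J` is injective into the
`n`-element sets of rows. -/

open Set Submodule Module Filter Matrix Topology

theorem exists_finset_subset_card_eq_finrank_span_eq_top {K V ι : Type*} [DivisionRing K]
    [AddCommGroup V] [Module K V] [FiniteDimensional K V] {v : ι → V} {s : Set ι}
    (hs : span K (v '' s) = ⊤) :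
    ∃ t : Finset ι, ↑t ⊆ s ∧ t.card = finrank K V ∧ span K (v '' t) = ⊤ := by
  obtain ⟨t, hts, -, hst, hli⟩ := exists_linearIndepOn_extension (linearIndepOn_empty K v)
    (empty_subset s)
  have hspan : span K (v '' t) = ⊤ := top_unique (hs ▸ span_le.2 hst)
  have : Finite t := hli.finite_of_isNoetherian
  lift t to Finset ι using Set.toFinite t
  refine ⟨t, hts, ?_, hspan⟩
  have := finrank_span_eq_card hli
  rw [← image_eq_range, hspan, finrank_top] at this
  simpa using this.symm

theorem Matrix.eq_of_mulVec_eqOn_of_span_eq_top {K m n : Type*} [Field K] [Fintype n]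
    (A : Matrix m n K) {s : Set m} (hs : span K (A '' s) = ⊤) {x y : n → K}
    (h : ∀ i ∈ s, (A *ᵥ x) i = (A *ᵥ y) i) : x = y := by
  classical
  rw [← sub_eq_zero]
  refine dotProduct_eq_zero _ fun w => ?_
  have hker : span K (A '' s) ≤ LinearMap.ker (dotProductEquiv K n (x - y)) := by
    rw [span_le]
    rintro _ ⟨i, hi, rfl⟩
    change (x - y) ⬝ᵥ A i = 0
    rw [dotProduct_comm, dotProduct_sub]
    exact sub_eq_zero.2 (h i hi)
  exact hker (hs ▸ mem_top : w ∈ span K (A '' s))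

def activeSet {R m n : Type*} [NonUnitalNonAssocSemiring R] [Fintype n] (A : Matrix m n R)
    (b : m → R) (x : n → R) : Set m :=
  {i | (A *ᵥ x) i = b i}

theorem eventually_mulVec_add_smul_le {n m : Type*} [Fintype n] [Finite m] {A : Matrix m n ℝ}
    {b : m → ℝ} {x d : n → ℝ} (hx : A *ᵥ x ≤ b)
    (hd : ∀ i ∈ activeSet A b x, (A *ᵥ d) i = 0) :
    ∀ᶠ t in 𝓝 (0 : ℝ), A *ᵥ (x + t • d) ≤ b := by
  refine eventually_all.2 fun i => ?_
  have hline (t : ℝ) : (A *ᵥ (x + t • d)) i = (A *ᵥ x) i + t * (A *ᵥ d) i := by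
    simp [mulVec_add, mulVec_smul]
  simp only [hline]
  rcases (hx i).eq_or_lt with hi | hi
  · exact .of_forall fun t => by simp [hd i hi, hi]
  · have hcont : ContinuousAt (fun t : ℝ => (A *ᵥ x) i + t * (A *ᵥ d) i) 0 := by fun_prop
    exact (hcont.eventually_lt continuousAt_const (by simpa using hi)).mono fun _ => le_of_lt

theorem span_image_activeSet_eq_top {n m : Type*} [Fintype n] [Finite m] {A : Matrix m n ℝ}
    {b : m → ℝ} {x : n → ℝ} (hx : x ∈ extremePoints ℝ {x | A *ᵥ x ≤ b}) :
    span ℝ (A '' activeSet A b x) = ⊤ := by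
  classical
  by_contra hne
  obtain ⟨f, hf0, hker⟩ := exists_le_ker_of_lt_top _ (lt_top_iff_ne_top.2 hne)
  set d := (dotProductEquiv ℝ n).symm f
  have hd0 : d ≠ 0 := by simpa [d] using hf0
  have hd (i) (hi : i ∈ activeSet A b x) : (A *ᵥ d) i = 0 := by
    calc (A *ᵥ d) i = dotProductEquiv ℝ n d (A i) := dotProduct_comm _ _
      _ = f (A i) := by simp [d]
      _ = 0 := hker (subset_span ⟨i, hi, rfl⟩)
  have hnd (i) (hi : i ∈ activeSet A b x) : (A *ᵥ -d) i = 0 := by simp [mulVec_neg, hd i hi]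
  obtain ⟨t, ht0, hplus, hminus⟩ := ((eventually_mem_nhdsWithin (s := {0}ᶜ) (a := 0)).and <|
    (eventually_nhdsWithin_of_eventually_nhds (eventually_mulVec_add_smul_le hx.1 hd)).and
    (eventually_nhdsWithin_of_eventually_nhds (eventually_mulVec_add_smul_le hx.1 hnd))).exists
  have hseg : x ∈ openSegment ℝ (x + t • -d) (x + t • d) :=
    ⟨1 / 2, 1 / 2, by norm_num, by norm_num, by norm_num, by module⟩
  have htd : t • d = 0 := by simpa using hx.2 hminus hplus hseg
  exact (smul_eq_zero.1 htd).elim ht0 hd0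

theorem encard_extremePoints_le_choose {n m : Type*} [Fintype n] [Fintype m]
    (A : Matrix m n ℝ) (b : m → ℝ) :
    (extremePoints ℝ {x | A *ᵥ x ≤ b}).encard ≤
      (Fintype.card m).choose (Fintype.card n) := by
  classical
  have hbasis (x) (hx : x ∈ extremePoints ℝ {x | A *ᵥ x ≤ b}) : ∃ J : Finset m,
      ↑J ⊆ activeSet A b x ∧ J.card = Fintype.card n ∧ span ℝ (A '' J) = ⊤ := by
    simpa using exists_finset_subset_card_eq_finrank_span_eq_top (span_image_activeSet_eq_top hx)
  choose! J hJactive hJcard hJspan using hbasis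
  have hJinj : InjOn J (extremePoints ℝ {x | A *ᵥ x ≤ b}) := fun x hx y hy hxy =>
    A.eq_of_mulVec_eqOn_of_span_eq_top (hJspan x hx) fun i hi =>
      (hJactive x hx hi).trans (hJactive y hy (hxy ▸ hi)).symm
  calc _ ≤ ((Finset.univ : Finset m).powersetCard (Fintype.card n) : Set (Finset m)).encard :=
        encard_le_encard_of_injOn (fun x hx => by simp [hJcard x hx]) hJinj
    _ = _ := by simp [encard_coe_eq_coe_finsetCard, Finset.card_powersetCard]

/-- A polyhedron `{x ∈ ℝ^n : A x ≤ b}` defined by `n + m` inequalities has at most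
`binom(n+m, n)` vertices (extreme points). -/
theorem polyhedron_vertices_card_le_choose
    (n m : ℕ) (A : Matrix (Fin (n + m)) (Fin n) ℝ) (b : Fin (n + m) → ℝ) :
    (Set.extremePoints ℝ {x : Fin n → ℝ | A.mulVec x ≤ b}).encard
      ≤ ((n + m).choose n : ℕ∞) := by
  simpa using encard_extremePoints_le_choose A b
end

section
/- Let G be a finite abelian group (written additively), let g_1, …, g_k ∈ G (k ≥ 1), let g_0 ∈ G, and let r be the order of g_k in G. Let G_{k−1}(g), for g ∈ G, denote the formal power series over ℤ in variables X_1, …, X_k whose coefficient at X^x (x ∈ ℕ^k) equals 1 if x_k = 0 and Σ_{i=1}^{k−1} x_i·g_i = g, and 0 otherwise. Then, as formal power series, (1 − X_k^r) · F_k(g_0) = Σ_{i=0}^{r−1} X_k^i · G_{k−1}(g_0 − i·g_k). -/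
/-!
Compare coefficients at `x`. On the right only the term `i = x_k` can contribute, and it does
exactly when `x_k < r`, with coefficient `[Σ_i x_i g_i = g_0]`. On the left the coefficient is
`[Σ_i x_i g_i = g_0]` minus, when `x_k ≥ r`, the same indicator at `x - r e_k`; since
`r g_k = 0` the two indicators agree, so for `x_k ≥ r` both sides vanish.
-/

open MvPowerSeries Finsupp

theorem MvPowerSeries.coeff_X_pow_mul' {σ R : Type*} [CommSemiring R] (s : σ) (i : ℕ)
    (φ : MvPowerSeries σ R) (x : σ →₀ ℕ) :
    coeff x (X s ^ i * φ) = if i ≤ x s then coeff (x - single s i) φ else 0 := by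
  rw [X_pow_eq, coeff_monomial_mul, one_mul]
  exact if_congr single_le_iff rfl rfl

theorem sum_smul_tsub_single_addOrderOf {ι G : Type*} [Fintype ι] [AddCommMonoid G]
    (g : ι → G) {x : ι →₀ ℕ} {s : ι} (h : addOrderOf (g s) ≤ x s) :
    ∑ i, (x - single s (addOrderOf (g s))) i • g i = ∑ i, x i • g i := by
  classical
  conv_rhs => rw [← tsub_add_cancel_of_le (single_le_iff.mpr h)]
  simp only [Finsupp.add_apply, add_smul, Finset.sum_add_distrib, single_apply, ite_smul,
    zero_smul, Finset.sum_ite_eq, Finset.mem_univ, if_true, addOrderOf_nsmul_eq_zero, add_zero]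

theorem coeff_X_last_pow_mul {n : ℕ} {G R : Type*} [AddCommMonoid G] [DecidableEq G]
    [CommSemiring R] {g : Fin (n + 1) → G} {ψ : MvPowerSeries (Fin (n + 1)) R} {a : G}
    (hψ : ∀ y : Fin (n + 1) →₀ ℕ, coeff y ψ =
      if y (Fin.last n) = 0 ∧ ∑ j : Fin n, y j.castSucc • g j.castSucc = a then 1 else 0)
    (i : ℕ) (x : Fin (n + 1) →₀ ℕ) :
    coeff x (X (Fin.last n) ^ i * ψ) =
      if x (Fin.last n) = i ∧ ∑ j : Fin n, x j.castSucc • g j.castSucc = a then 1 else 0 := by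
  rw [coeff_X_pow_mul', hψ]
  have h_castSucc (j : Fin n) : (x - single (Fin.last n) i) j.castSucc = x j.castSucc := by simp
  simp only [h_castSucc, tsub_apply, single_eq_same]
  split_ifs <;> grind

theorem group_generating_function_recurrence_general
    (n : ℕ) (G : Type*) [AddCommGroup G] [DecidableEq G]
    (g : Fin (n + 1) → G) (g0 : G)
    (F Gm : G → MvPowerSeries (Fin (n + 1)) ℤ)
    (hF : ∀ (a : G) (x : Fin (n + 1) →₀ ℕ),
      MvPowerSeries.coeff x (F a) = if (∑ i, x i • g i) = a then 1 else 0)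
    (hG : ∀ (a : G) (x : Fin (n + 1) →₀ ℕ),
      MvPowerSeries.coeff x (Gm a) =
        if x (Fin.last n) = 0 ∧ (∑ i : Fin n, x i.castSucc • g i.castSucc) = a then 1
        else 0) :
    (1 - MvPowerSeries.X (Fin.last n) ^ addOrderOf (g (Fin.last n))) * F g0 =
      ∑ i ∈ Finset.range (addOrderOf (g (Fin.last n))),
        MvPowerSeries.X (Fin.last n) ^ i * Gm (g0 - i • g (Fin.last n)) := by
  ext x
  rw [map_sum, sub_mul, one_mul, map_sub, coeff_X_pow_mul', hF, hF]
  simp only [coeff_X_last_pow_mul (hG _), ite_and, Finset.sum_ite_eq, Finset.mem_range]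
  by_cases hx : addOrderOf (g (Fin.last n)) ≤ x (Fin.last n)
  · rw [if_pos hx, sum_smul_tsub_single_addOrderOf g hx, sub_self, if_neg hx.not_gt]
  · rw [if_neg hx, if_pos (not_le.mp hx), sub_zero, Fin.sum_univ_castSucc]
    exact if_congr eq_sub_iff_add_eq.symm rfl rfl

/-- Recurrence for the generating function of a group system: with `k = n + 1 ≥ 1`
group elements `g_1, …, g_k`, `r` the order of `g_k`, `F_k(a)` the power series whose
coefficient at `X^x` is `1` iff `Σ_i x_i • g_i = a`, and `G_{k-1}(a)` the power series whose
coefficient at `X^x` is `1` iff `x_k = 0` and `Σ_{i<k} x_i • g_i = a`, one has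
`(1 - X_k^r) · F_k(g_0) = Σ_{i=0}^{r-1} X_k^i · G_{k-1}(g_0 - i·g_k)`. -/
theorem group_generating_function_recurrence
    (n : ℕ) (G : Type*) [AddCommGroup G] [Fintype G] [DecidableEq G]
    (g : Fin (n + 1) → G) (g0 : G)
    (F Gm : G → MvPowerSeries (Fin (n + 1)) ℤ)
    (hF : ∀ (a : G) (x : Fin (n + 1) →₀ ℕ),
      MvPowerSeries.coeff x (F a) = if (∑ i, x i • g i) = a then 1 else 0)
    (hG : ∀ (a : G) (x : Fin (n + 1) →₀ ℕ),
      MvPowerSeries.coeff x (Gm a) =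
        if x (Fin.last n) = 0 ∧ (∑ i : Fin n, x i.castSucc • g i.castSucc) = a then 1
        else 0) :
    (1 - MvPowerSeries.X (Fin.last n) ^ addOrderOf (g (Fin.last n))) * F g0 =
      ∑ i ∈ Finset.range (addOrderOf (g (Fin.last n))),
        MvPowerSeries.X (Fin.last n) ^ i * Gm (g0 - i • g (Fin.last n)) :=
  group_generating_function_recurrence_general n G g g0 F Gm hF hG
end

section
/- Let G be a finite abelian group (written additively), let g_1, …, g_k ∈ G, let g_0 ∈ G, and let r_i be the order of g_i for i = 1, …, k. Then, as formal power series over ℤ in X_1, …, X_k, the product (∏_{i=1}^k (1 − X_i^{r_i})) · F_k(g_0) equals the polynomial Σ_z X^z, where the sum ranges over all z ∈ ℕ^k with z_i < r_i for every i and Σ_{i=1}^k z_i·g_i = g_0. In particular, this product is a polynomial all of whose coefficients lie in {0, 1} and whose degree in X_i is at most r_i − 1. -/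
/-!
Since `r_i • g_i = 0`, the coefficient of `X^x` in `F(g_0)` is periodic in `x_i` with period
`r_i`. Multiplying a series whose coefficients are `r_j`-periodic in `x_j` by `1 - X_j^{r_j}`
kills the coefficients with `x_j ≥ r_j`, keeps the others, and preserves periodicity in the
other directions; doing this for every `j` truncates `F(g_0)` to the box `x_i < r_i`.
-/

open MvPowerSeries Finsupp

section Periodic

variable {σ R : Type*}

theorem MvPowerSeries.coeff_one_sub_X_pow_mul_of_periodic [Ring R] (j : σ) (n : ℕ)
    (φ : MvPowerSeries σ R) (hφ : ∀ x, coeff (x + single j n) φ = coeff x φ)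
    (x : σ →₀ ℕ) :
    coeff x ((1 - X j ^ n) * φ) = if x j < n then coeff x φ else 0 := by
  rw [sub_mul, one_mul, map_sub, X_pow_eq, coeff_monomial_mul, one_mul]
  by_cases hle : single j n ≤ x
  · have hn : ¬ x j < n := not_lt.mpr (by simpa using hle j)
    rw [if_pos hle, if_neg hn, ← hφ (x - single j n), tsub_add_cancel_of_le hle, sub_self]
  · have hn : x j < n := by
      by_contra! h
      exact hle (single_le_iff.mpr h)
    rw [if_neg hle, if_pos hn, sub_zero]

theorem MvPowerSeries.coeff_prod_one_sub_X_pow_mul_of_periodic [CommRing R] (n : σ → ℕ)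
    (φ : MvPowerSeries σ R) (S : Finset σ)
    (hφ : ∀ i ∈ S, ∀ x, coeff (x + single i (n i)) φ = coeff x φ) (x : σ →₀ ℕ) :
    coeff x ((∏ i ∈ S, (1 - X i ^ n i)) * φ) = if ∀ i ∈ S, x i < n i then coeff x φ else 0 := by
  classical
  induction S using Finset.induction generalizing x with
  | empty => simp
  | @insert j S hj ih =>
    have ih := ih fun i hi => hφ i (Finset.mem_insert_of_mem hi)
    have hperiodic : ∀ y, coeff (y + single j (n j)) ((∏ i ∈ S, (1 - X i ^ n i)) * φ) =
        coeff y ((∏ i ∈ S, (1 - X i ^ n i)) * φ) := by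
      intro y
      have hS : (∀ i ∈ S, (y + single j (n j)) i < n i) ↔ ∀ i ∈ S, y i < n i :=
        forall₂_congr fun i hi => by simp [ne_of_mem_of_not_mem hi hj]
      simp only [ih, hS, hφ j (Finset.mem_insert_self j S)]
    rw [Finset.prod_insert hj, mul_assoc, coeff_one_sub_X_pow_mul_of_periodic j (n j) _ hperiodic]
    simp only [ih, Finset.forall_mem_insert, ite_and]

end Periodic

theorem sum_add_single_nsmul {ι M : Type*} [Fintype ι] [DecidableEq ι] [AddCommMonoid M]
    (v : ι → M) (x : ι →₀ ℕ) (j : ι) (n : ℕ) :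
    ∑ i, (x + single j n) i • v i = ∑ i, x i • v i + n • v j := by
  simp [add_smul, Finset.sum_add_distrib, single_apply, ite_smul]

theorem group_generating_function_closed_form_general
    (k : ℕ) (G : Type*) [AddCommGroup G] [DecidableEq G]
    (g : Fin k → G) (g0 : G)
    (F : G → MvPowerSeries (Fin k) ℤ)
    (hF : ∀ (a : G) (x : Fin k →₀ ℕ),
      MvPowerSeries.coeff x (F a) = if (∑ i, x i • g i) = a then 1 else 0) :
    ∀ x : Fin k →₀ ℕ,
      MvPowerSeries.coeff x
          ((∏ i, (1 - MvPowerSeries.X i ^ addOrderOf (g i))) * F g0) =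
        if (∀ i, x i < addOrderOf (g i)) ∧ (∑ i, x i • g i = g0) then 1 else 0 := by
  intro x
  have hperiodic : ∀ i ∈ Finset.univ, ∀ y, coeff (y + single i (addOrderOf (g i))) (F g0) =
      coeff y (F g0) := fun i _ y => by
    rw [hF, hF, sum_add_single_nsmul, addOrderOf_nsmul_eq_zero, add_zero]
  rw [coeff_prod_one_sub_X_pow_mul_of_periodic _ _ _ hperiodic, hF]
  simp only [Finset.mem_univ, true_imp_iff, ite_and]

/-- Closed form of the group generating function: with `r_i` the order of `g_i`, the
product `(∏_i (1 - X_i^{r_i})) · F_k(g_0)` is the polynomial `Σ_z X^z`, summed over all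
`z ∈ ℕ^k` with `z_i < r_i` for every `i` and `Σ_i z_i • g_i = g_0`; in particular its
coefficients lie in `{0,1}` and its degree in `X_i` is at most `r_i - 1`.  This is
expressed coefficientwise. -/
theorem group_generating_function_closed_form
    (k : ℕ) (G : Type*) [AddCommGroup G] [Fintype G] [DecidableEq G]
    (g : Fin k → G) (g0 : G)
    (F : G → MvPowerSeries (Fin k) ℤ)
    (hF : ∀ (a : G) (x : Fin k →₀ ℕ),
      MvPowerSeries.coeff x (F a) = if (∑ i, x i • g i) = a then 1 else 0) :
    ∀ x : Fin k →₀ ℕ,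
      MvPowerSeries.coeff x
          ((∏ i, (1 - MvPowerSeries.X i ^ addOrderOf (g i))) * F g0) =
        if (∀ i, x i < addOrderOf (g i)) ∧ (∑ i, x i • g i = g0) then 1 else 0 :=
  group_generating_function_closed_form_general k G g g0 F hF
end

section
/- Let A ∈ ℤ^{n×n} with det(A) ≠ 0, let b ∈ ℤ^n, and let P, Q ∈ ℤ^{n×n} be unimodular matrices (|det P| = |det Q| = 1) such that S = P A Q is diagonal with positive diagonal entries. Then the map y ↦ A^{-1}(b − y) is a bijection from the set {y ∈ ℤ^n : y ≥ 0 and P(b − y) ∈ S·ℤ^n} onto the set {x ∈ ℤ^n : A x ≤ b}. -/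
/-!
Since `P` and `Q` are invertible over `ℤ`, the congruence `P (b - y) ∈ (P A Q) ℤⁿ` says exactly
that `b - y = A x` for some integral `x`, and then `A⁻¹ (b - y) = x`. So the slack map
`x ↦ b - A x` inverts `y ↦ A⁻¹ (b - y)`, and `y ≥ 0` corresponds to `A x ≤ b`.
-/

open Matrix

namespace Matrix

variable {m R : Type*} [Fintype m] [DecidableEq m] [CommRing R]

theorem exists_mulVec_eq_mul_mul_mulVec_iff {P A Q : Matrix m m R} (hP : IsUnit P.det)
    (hQ : IsUnit Q.det) (w : m → R) :
    (∃ z, P *ᵥ w = (P * A * Q) *ᵥ z) ↔ ∃ x, A *ᵥ x = w := by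
  have hPinj : Function.Injective P.mulVec :=
    mulVec_injective_of_isUnit ((isUnit_iff_isUnit_det P).2 hP)
  have hQsurj : Function.Surjective Q.mulVec :=
    mulVec_surjective_iff_isUnit.2 ((isUnit_iff_isUnit_det Q).2 hQ)
  simp only [← mulVec_mulVec, hPinj.eq_iff, hQsurj.exists (p := fun x => w = A *ᵥ x), eq_comm]

theorem intCast_map_inv_mulVec_of_mulVec_eq {K : Type*} [Field K] [CharZero K]
    {A : Matrix m m ℤ} (hA : A.det ≠ 0) {x w : m → ℤ} (hx : A *ᵥ x = w) :
    (A.map (Int.cast : ℤ → K))⁻¹ *ᵥ (fun i => (w i : K)) = fun i => (x i : K) := by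
  have hdet : IsUnit (A.map (Int.cast : ℤ → K)).det := by
    rw [isUnit_iff_ne_zero, ← Int.cast_det]
    exact_mod_cast hA
  have hcast : (fun i => (w i : K)) = A.map (Int.cast : ℤ → K) *ᵥ fun i => (x i : K) := by
    funext i
    rw [← hx]
    exact (Int.castRingHom K).map_mulVec A x i
  rw [hcast, mulVec_mulVec, nonsing_inv_mul _ hdet, one_mulVec]

end Matrix

theorem group_polyhedron_bijection_general
    (n : ℕ) (A P Q : Matrix (Fin n) (Fin n) ℤ) (b : Fin n → ℤ)
    (hA : A.det ≠ 0) (hP : IsUnit P.det) (hQ : IsUnit Q.det) :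
    Set.BijOn
      (fun y : Fin n → ℤ =>
        (A.map (Int.cast : ℤ → ℚ))⁻¹.mulVec fun i => ((b i - y i : ℤ) : ℚ))
      {y : Fin n → ℤ | 0 ≤ y ∧ ∃ z : Fin n → ℤ, P.mulVec (b - y) = (P * A * Q).mulVec z}
      ((fun x : Fin n → ℤ => fun i => ((x i : ℤ) : ℚ)) '' {x : Fin n → ℤ | A.mulVec x ≤ b}) := by
  have hsolve : ∀ y x, A *ᵥ x = b - y →
      (A.map (Int.cast : ℤ → ℚ))⁻¹ *ᵥ (fun i => ((b i - y i : ℤ) : ℚ)) = fun i => (x i : ℚ) :=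
    fun _ _ hx => intCast_map_inv_mulVec_of_mulVec_eq hA hx
  have hlattice := fun y : Fin n → ℤ => exists_mulVec_eq_mul_mul_mulVec_iff (A := A) hP hQ (b - y)
  refine ⟨?_, ?_, ?_⟩
  · rintro y ⟨hy, hz⟩
    obtain ⟨x, hx⟩ := (hlattice y).1 hz
    exact ⟨x, show A *ᵥ x ≤ b from hx ▸ sub_le_self b hy, (hsolve y x hx).symm⟩
  · rintro y₁ ⟨-, hz₁⟩ y₂ ⟨-, hz₂⟩ h
    obtain ⟨x₁, hx₁⟩ := (hlattice y₁).1 hz₁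
    obtain ⟨x₂, hx₂⟩ := (hlattice y₂).1 hz₂
    have hx : x₁ = x₂ := by
      have h' := (hsolve y₁ x₁ hx₁).symm.trans (h.trans (hsolve y₂ x₂ hx₂))
      exact funext fun i => by exact_mod_cast congrFun h' i
    exact sub_right_injective (hx₁.symm.trans (hx ▸ hx₂))
  · rintro _ ⟨x, hx, rfl⟩
    have hslack : A *ᵥ x = b - (b - A *ᵥ x) := (sub_sub_cancel b _).symm
    exact ⟨b - A *ᵥ x, ⟨sub_nonneg.2 hx, (hlattice _).2 ⟨x, hslack⟩⟩, hsolve _ x hslack⟩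

/-- Let `S = P A Q` be a Smith-normal-form-like decomposition of a nonsingular integer
matrix `A` (with `P`, `Q` unimodular and `S` diagonal with positive diagonal).  Then
`y ↦ A⁻¹(b − y)` is a bijection from `{y ∈ ℤ^n : y ≥ 0, P(b − y) ∈ S·ℤ^n}` onto
`{x ∈ ℤ^n : A x ≤ b}` (viewed inside `ℚ^n`; in particular the image is integral). -/
theorem group_polyhedron_bijection
    (n : ℕ) (A P Q : Matrix (Fin n) (Fin n) ℤ) (b : Fin n → ℤ)
    (hA : A.det ≠ 0) (hP : IsUnit P.det) (hQ : IsUnit Q.det)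
    (hdiag : (P * A * Q).IsDiag) (hpos : ∀ i, 0 < (P * A * Q) i i) :
    Set.BijOn
      (fun y : Fin n → ℤ =>
        (A.map (Int.cast : ℤ → ℚ))⁻¹.mulVec fun i => ((b i - y i : ℤ) : ℚ))
      {y : Fin n → ℤ | 0 ≤ y ∧ ∃ z : Fin n → ℤ, P.mulVec (b - y) = (P * A * Q).mulVec z}
      ((fun x : Fin n → ℤ => fun i => ((x i : ℤ) : ℚ)) '' {x : Fin n → ℤ | A.mulVec x ≤ b}) :=
  group_polyhedron_bijection_general n A P Q b hA hP hQ
end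

section
/- Let A ∈ ℤ^{n×n} with det(A) ≠ 0, and let P, Q ∈ ℤ^{n×n} be unimodular matrices (|det P| = |det Q| = 1) such that S = P A Q is diagonal with positive diagonal entries. Let b, b' ∈ ℤ^n satisfy P(b − b') ∈ S·ℤ^n. Then w := A^{-1}(b − b') is an integer vector, and the translation x ↦ x − w is a bijection from {x ∈ ℤ^n : A x ≤ b} onto {x ∈ ℤ^n : A x ≤ b'}. -/
/-!
The congruence reads `P (b - b') = P (A (Q z))`; cancelling the unimodular `P` gives
`A w = b - b'` for the integer vector `w = Q z`, which is therefore `A⁻¹ (b - b')`.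
Since `A (x - w) = A x - (b - b')`, subtracting `w` turns `A x ≤ b` into exactly `A x ≤ b'`.
-/

open Matrix

namespace Matrix

variable {m n R K : Type*} [Fintype n]

theorem inv_map_mulVec_comp_eq_comp_of_mulVec_eq [DecidableEq n] [CommRing R] [Field K]
    {f : R →+* K} (hf : Function.Injective f) {A : Matrix n n R} (hA : A.det ≠ 0)
    {w c : n → R} (h : A *ᵥ w = c) : (A.map f)⁻¹ *ᵥ (f ∘ c) = f ∘ w := by
  have hAf : IsUnit (A.map f).det := by
    rw [isUnit_iff_ne_zero, ← RingHom.mapMatrix_apply, ← f.map_det]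
    exact (map_ne_zero_iff f hf).2 hA
  have hmap : A.map f *ᵥ (f ∘ w) = f ∘ c := by
    ext i
    rw [← h, Function.comp_apply, RingHom.map_mulVec]
  rw [← hmap, mulVec_mulVec, nonsing_inv_mul _ hAf, one_mulVec]

theorem bijOn_sub_setOf_mulVec_le
    [NonUnitalNonAssocRing R] [PartialOrder R] [IsOrderedAddMonoid R] (A : Matrix m n R) {w : n → R} {b b' : m → R} (hw : A *ᵥ w = b - b') :
    Set.BijOn (fun x => x - w) {x | A *ᵥ x ≤ b} {x | A *ᵥ x ≤ b'} := by
  refine (Equiv.subRight w).bijOn fun x => ?_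
  simp only [Equiv.subRight_apply, Set.mem_ofPred_eq, mulVec_sub, hw]
  rw [sub_le_iff_le_add, add_sub_cancel]

end Matrix

theorem congruent_rhs_translation_bijection_general
    (n : ℕ) (A P Q : Matrix (Fin n) (Fin n) ℤ) (b b' : Fin n → ℤ)
    (hA : A.det ≠ 0) (hP : IsUnit P.det)
    (hcong : ∃ z : Fin n → ℤ, P.mulVec (b - b') = (P * A * Q).mulVec z) :
    ∃ w : Fin n → ℤ,
      (∀ j : Fin n,
        (w j : ℚ) = (A.map (Int.cast : ℤ → ℚ))⁻¹.mulVec (fun i => ((b i - b' i : ℤ) : ℚ)) j) ∧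
      Set.BijOn (fun x : Fin n → ℤ => x - w)
        {x : Fin n → ℤ | A.mulVec x ≤ b} {x : Fin n → ℤ | A.mulVec x ≤ b'} := by
  obtain ⟨z, hz⟩ := hcong
  have hAw : A *ᵥ (Q *ᵥ z) = b - b' :=
    mulVec_injective_of_isUnit ((isUnit_iff_isUnit_det P).2 hP) <| by
      simp only [hz, mulVec_mulVec, mul_assoc]
  refine ⟨Q *ᵥ z, fun j => ?_, bijOn_sub_setOf_mulVec_le A hAw⟩
  exact (congrFun (inv_map_mulVec_comp_eq_comp_of_mulVec_eq (f := Int.castRingHom ℚ)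
    Int.cast_injective hA hAw) j).symm

/-- With `S = P A Q` diagonal (P, Q unimodular, positive diagonal), if
`P(b − b') ∈ S·ℤ^n`, then `w := A⁻¹(b − b')` is an integer vector and `x ↦ x − w` is a
bijection from `{x ∈ ℤ^n : A x ≤ b}` onto `{x ∈ ℤ^n : A x ≤ b'}`. -/
theorem congruent_rhs_translation_bijection
    (n : ℕ) (A P Q : Matrix (Fin n) (Fin n) ℤ) (b b' : Fin n → ℤ)
    (hA : A.det ≠ 0) (hP : IsUnit P.det) (hQ : IsUnit Q.det)
    (hdiag : (P * A * Q).IsDiag) (hpos : ∀ i, 0 < (P * A * Q) i i)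
    (hcong : ∃ z : Fin n → ℤ, P.mulVec (b - b') = (P * A * Q).mulVec z) :
    ∃ w : Fin n → ℤ,
      (∀ j : Fin n,
        (w j : ℚ) = (A.map (Int.cast : ℤ → ℚ))⁻¹.mulVec (fun i => ((b i - b' i : ℤ) : ℚ)) j) ∧
      Set.BijOn (fun x : Fin n → ℤ => x - w)
        {x : Fin n → ℤ | A.mulVec x ≤ b} {x : Fin n → ℤ | A.mulVec x ≤ b'} :=
  congruent_rhs_translation_bijection_general n A P Q b b' hA hP hcong
end

section
/- Let A ∈ ℤ^{m×n} with m ≥ n, let J' ⊆ {1,…,m} with |J'| = n, and let c^⊤ = Σ_{i ∈ J'} A_{i*} be the sum of the rows of A indexed by J'. Let J ⊆ {1,…,m} with |J| = n and det(A_J) ≠ 0. Then for every l ∈ {1,…,n}, the l-th entry of the row vector c^⊤ · (det(A_J) · A_J^{-1}) has absolute value at most n · Δ_n(A). -/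
/-!
By Cramer's rule, the `l`-th entry of `cᵀ · adj(A_J)` is `det` of `A_J` with its `l`-th row
replaced by `c`. As `c` is a sum of `n` rows of `A`, multilinearity of the determinant splits
this into `n` determinants of row selections of `A`, each of absolute value at most `Δ_n(A)`.
-/

open Matrix

namespace Matrix

variable {m n R : Type*} [DecidableEq n]

theorem updateRow_submatrix_id [DecidableEq m] (A : Matrix m n R) (e : n → m) (l : n) (i : m) :
    (A.submatrix e id).updateRow l (A i) = A.submatrix (Function.update e l i) id := by
  ext k j
  rcases eq_or_ne k l with rfl | hk
  · simp
  · simp [hk]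

variable [Fintype n]

/-- The paper's `Δ_n(A)`. -/
noncomputable def maxAbsMinor [Fintype m] [DecidableEq m] (A : Matrix m n ℤ) : ℕ :=
  Finset.univ.sup fun f : n ↪ m => (A.submatrix f id).det.natAbs

/-- A row selection that repeats a row has determinant zero, so it is also bounded by `Δ_n`. -/
theorem natAbs_det_submatrix_le_maxAbsMinor [Fintype m] [DecidableEq m] (A : Matrix m n ℤ)
    (g : n → m) : (A.submatrix g id).det.natAbs ≤ A.maxAbsMinor := by
  by_cases hg : Function.Injective g
  · exact Finset.le_sup (f := fun f : n ↪ m => (A.submatrix f id).det.natAbs)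
      (Finset.mem_univ ⟨g, hg⟩)
  · obtain ⟨a, b, hab, hne⟩ : ∃ a b, g a = g b ∧ a ≠ b := by
      simpa [Function.Injective] using hg
    rw [det_zero_of_row_eq hne (by ext j; simp [hab]), Int.natAbs_zero]
    exact Nat.zero_le _

theorem vecMul_adjugate_apply [CommRing R] (B : Matrix n n R) (c : n → R) (l : n) :
    (c ᵥ* B.adjugate) l = (B.updateRow l c).det := by
  rw [← cramer_transpose_apply, cramer_eq_adjugate_mulVec, ← adjugate_transpose,
    mulVec_transpose]

theorem det_smul_inv_eq_adjugate [CommRing R] (B : Matrix n n R) (h : IsUnit B.det) :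
    B.det • B⁻¹ = B.adjugate := by
  rw [nonsing_inv_apply B h, smul_smul, h.mul_val_inv, one_smul]

theorem abs_sum_rows_vecMul_adjugate_submatrix_le [Fintype m] [DecidableEq m]
    (A : Matrix m n ℤ) (s : Finset m) (e : n → m) (l : n) :
    |((∑ i ∈ s, A i) ᵥ* (A.submatrix e id).adjugate) l| ≤ s.card * A.maxAbsMinor := by
  have hterm (i : m) : |((A i) ᵥ* (A.submatrix e id).adjugate) l| ≤ A.maxAbsMinor := by
    rw [vecMul_adjugate_apply, updateRow_submatrix_id, Int.abs_eq_natAbs]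
    exact_mod_cast natAbs_det_submatrix_le_maxAbsMinor A _
  calc |((∑ i ∈ s, A i) ᵥ* (A.submatrix e id).adjugate) l|
      = |∑ i ∈ s, ((A i) ᵥ* (A.submatrix e id).adjugate) l| := by
        rw [sum_vecMul s A, Finset.sum_apply]
    _ ≤ ∑ i ∈ s, |((A i) ᵥ* (A.submatrix e id).adjugate) l| := Finset.abs_sum_le_sum_abs _ _
    _ ≤ s.card * A.maxAbsMinor := by
        simpa using Finset.sum_le_card_nsmul s _ _ fun i _ => hterm i

end Matrix

theorem row_sum_times_adjugate_bound_general
    (m n : ℕ) (A : Matrix (Fin m) (Fin n) ℤ)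
    (J' : Finset (Fin m)) (hJ' : J'.card = n)
    (e : Fin n ↪ Fin m) (hdet : (A.submatrix e id).det ≠ 0) :
    ∀ l : Fin n,
      |Matrix.vecMul (fun j => (((∑ i ∈ J', A i) j : ℤ) : ℚ))
          (((A.submatrix e id).det : ℚ) •
            ((A.submatrix e id).map (Int.cast : ℤ → ℚ))⁻¹) l|
        ≤ (n : ℚ) * ((Finset.univ.sup
            fun f : Fin n ↪ Fin m => (A.submatrix f id).det.natAbs : ℕ) : ℚ) := by
  intro l
  set f := Int.castRingHom ℚ
  have hunit : IsUnit (f.mapMatrix (A.submatrix e id)).det := by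
    rw [← f.map_det]
    exact isUnit_iff_ne_zero.mpr (Int.cast_ne_zero.mpr hdet)
  have hadj : ((A.submatrix e id).det : ℚ) • ((A.submatrix e id).map (Int.cast : ℤ → ℚ))⁻¹
      = (A.submatrix e id).adjugate.map f := by
    rw [← RingHom.mapMatrix_apply, f.map_adjugate, ← det_smul_inv_eq_adjugate _ hunit,
      ← f.map_det]
    rfl
  rw [hadj, show (fun j => (((∑ i ∈ J', A i) j : ℤ) : ℚ)) = f ∘ ∑ i ∈ J', A i from rfl,
    ← f.map_vecMul]
  have hbound := hJ' ▸ abs_sum_rows_vecMul_adjugate_submatrix_le A J' e l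
  rw [eq_intCast, ← Int.cast_abs]
  exact_mod_cast hbound

/-- For `A ∈ ℤ^{m×n}` with `m ≥ n`, `cᵀ = Σ_{i ∈ J'} A_{i*}` a sum of `n` rows of `A`, and
a nonsingular row-selection `A_J` (`|J| = n`), every entry of the row vector
`cᵀ · (det(A_J) · A_J⁻¹)` has absolute value at most `n · Δ_n(A)`. -/
theorem row_sum_times_adjugate_bound
    (m n : ℕ) (hmn : n ≤ m) (A : Matrix (Fin m) (Fin n) ℤ)
    (J' : Finset (Fin m)) (hJ' : J'.card = n)
    (e : Fin n ↪ Fin m) (hdet : (A.submatrix e id).det ≠ 0) :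
    ∀ l : Fin n,
      |Matrix.vecMul (fun j => (((∑ i ∈ J', A i) j : ℤ) : ℚ))
          (((A.submatrix e id).det : ℚ) •
            ((A.submatrix e id).map (Int.cast : ℤ → ℚ))⁻¹) l|
        ≤ (n : ℚ) * ((Finset.univ.sup
            fun f : Fin n ↪ Fin m => (A.submatrix f id).det.natAbs : ℕ) : ℚ) :=
  row_sum_times_adjugate_bound_general m n A J' hJ' e hdet
end

section
/- Let A ∈ ℤ^{n×n} with det(A) ≠ 0, let b ∈ ℤ^n, and let c ∈ ℝ^n be such that every entry of the row vector c^⊤ A^{-1} is positive. Then for every real τ > 0, the family (exp(τ·⟨c, x⟩))_{x ∈ 𝒫(A,b) ∩ ℤ^n} is summable; that is, the series Σ_{x ∈ ℤ^n, A x ≤ b} exp(τ·⟨c, x⟩) converges. -/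
/-!
Put `y = A x` and `d = cᵀ A⁻¹`, so that `⟨c, x⟩ = ⟨d, y⟩` and `A x ≤ b` reads `y ≤ b`.
Since `x ↦ A x` is injective on `ℤⁿ`, the series is dominated by `∑_{y ∈ ℤⁿ, y ≤ b} exp(τ ⟨d, y⟩)`,
which factors into `n` geometric series `∑_{z ≤ b_j} exp(τ d_j z)`; these converge as `d_j > 0`.
-/

open Matrix Finset

theorem summable_prod_apply_of_nonneg {ι : Type*} [Fintype ι] {κ : ι → Type*}
    {f : ∀ i, κ i → ℝ} (hf : ∀ i, 0 ≤ f i) (hs : ∀ i, Summable (f i)) :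
    Summable fun x : (∀ i, κ i) => ∏ i, f i (x i) := by
  classical
  refine summable_of_sum_le (c := ∏ i, ∑' k, f i k)
    (fun x => prod_nonneg fun i _ => hf i (x i)) fun s => ?_
  calc ∑ x ∈ s, ∏ i, f i (x i)
      ≤ ∑ x ∈ Fintype.piFinset fun i => s.image (· i), ∏ i, f i (x i) :=
        sum_le_sum_of_subset_of_nonneg
          (fun x hx => Fintype.mem_piFinset.2 fun i => mem_image_of_mem _ hx)
          fun x _ _ => prod_nonneg fun i _ => hf i (x i)
    _ = ∏ i, ∑ k ∈ s.image (· i), f i k := (prod_univ_sum _ _).symm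
    _ ≤ ∏ i, ∑' k, f i k :=
        prod_le_prod (fun i _ => sum_nonneg fun k _ => hf i k)
          fun i _ => (hs i).sum_le_tsum _ fun k _ => hf i k

theorem Real.summable_exp_mul_int_of_le {t : ℝ} (ht : 0 < t) (B : ℤ) :
    Summable fun z : {z : ℤ // z ≤ B} => Real.exp (t * z) := by
  have hgeom : Summable fun k : ℕ => Real.exp (t * B) * Real.exp (k * -t) :=
    (Real.summable_exp_nat_mul_iff.2 (neg_lt_zero.2 ht)).mul_left _
  have hinj : Function.Injective fun z : {z : ℤ // z ≤ B} => (B - z).toNat := by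
    rintro ⟨z, hz⟩ ⟨w, hw⟩ h
    simp only [Subtype.mk.injEq] at h ⊢
    omega
  refine (hgeom.comp_injective hinj).congr fun z => ?_
  have hz : ((B - z).toNat : ℝ) = B - z := by
    exact_mod_cast Int.toNat_of_nonneg (sub_nonneg.2 z.2)
  simp only [Function.comp_apply, ← Real.exp_add, hz]
  ring_nf

theorem summable_exp_sum_mul_of_le {ι : Type*} [Fintype ι] {d : ι → ℝ} (hd : ∀ j, 0 < d j)
    (b : ι → ℤ) : Summable fun y : {y : ι → ℤ // y ≤ b} => Real.exp (∑ j, d j * y.1 j) := by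
  have hprod := summable_prod_apply_of_nonneg (fun j _ => (Real.exp_pos _).le)
    fun j => Real.summable_exp_mul_int_of_le (hd j) (b j)
  refine (hprod.comp_injective
    (Equiv.subtypePiEquivPi (p := fun j z => z ≤ b j)).injective).congr fun y => ?_
  simp only [Function.comp_apply, Real.exp_sum]
  rfl

theorem Matrix.dotProduct_eq_vecMul_inv_dotProduct_mulVec {ι R : Type*} [Fintype ι]
    [DecidableEq ι] [CommRing R] {M : Matrix ι ι R} (hM : IsUnit M.det) (c v : ι → R) :
    c ⬝ᵥ v = (c ᵥ* M⁻¹) ⬝ᵥ (M *ᵥ v) := by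
  rw [dotProduct_mulVec, vecMul_vecMul, nonsing_inv_mul _ hM, vecMul_one]

/-- If every entry of the row vector `cᵀ A⁻¹` is positive, then the series
`Σ_{x ∈ ℤ^n, A x ≤ b} exp(τ·⟨c, x⟩)` converges for every `τ > 0`. -/
theorem exponential_sum_over_polyhedron_summable
    (n : ℕ) (A : Matrix (Fin n) (Fin n) ℤ) (b : Fin n → ℤ) (c : Fin n → ℝ)
    (hA : A.det ≠ 0)
    (hc : ∀ j : Fin n, 0 < Matrix.vecMul c (A.map (Int.cast : ℤ → ℝ))⁻¹ j) :
    ∀ τ : ℝ, 0 < τ →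
      Summable (fun x : {x : Fin n → ℤ // A.mulVec x ≤ b} =>
        Real.exp (τ * ∑ i, c i * (x.1 i : ℝ))) := by
  intro τ hτ
  set M : Matrix (Fin n) (Fin n) ℝ := A.map Int.cast
  have hM : IsUnit M.det := by simpa [M, ← Int.cast_det] using hA
  have hcast (x : Fin n → ℤ) : M *ᵥ (Int.cast ∘ x) = Int.cast ∘ (A *ᵥ x) := by
    funext i
    simp [M, mulVec, dotProduct]
  have hsubst (x : Fin n → ℤ) :
      ∑ i, c i * (x i : ℝ) = ∑ j, (c ᵥ* M⁻¹) j * ((A *ᵥ x) j : ℝ) := by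
    simpa [dotProduct, hcast] using dotProduct_eq_vecMul_inv_dotProduct_mulVec hM c (Int.cast ∘ x)
  have hinj : Function.Injective
      fun x : {x : Fin n → ℤ // A *ᵥ x ≤ b} => (⟨A *ᵥ x, x.2⟩ : {y // y ≤ b}) :=
    fun x y h => Subtype.ext (mulVec_injective_of_det_ne_zero hA (congrArg Subtype.val h))
  refine ((summable_exp_sum_mul_of_le (fun j => mul_pos hτ (hc j)) b).comp_injective hinj).congr
    fun x => ?_
  simp only [Function.comp_apply, hsubst, mul_sum, mul_assoc]
end

section
/- Let A ∈ ℤ^{n×n} with Δ = |det(A)| > 0, let b ∈ ℤ^n, and let P, Q ∈ ℤ^{n×n} be unimodular matrices such that S = P A Q is diagonal with positive diagonal entries satisfying S_{11} | S_{22} | … | S_{nn}; set σ = S_{nn}. Let c ∈ ℤ^n be such that every entry of the row vector c^⊤ A^{-1} is positive, let h_i = Δ·A^{-1} e_i ∈ ℤ^n for i = 1,…,n, let χ = max_{i} ⟨c, h_i⟩, and let N = n·σ·χ. Then there exist nonnegative integers ε_i for i ∈ {−N, …, N}, integers α_i for i ∈ {−N, …, N}, and negative integers β_1, …, β_n, such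 that for every real τ > 0: Σ_{x ∈ 𝒫(A,b) ∩ ℤ^n} exp(τ·⟨c, x⟩) = (Σ_{i=−N}^{N} ε_i · exp(τ·α_i)) / (∏_{j=1}^{n} (1 − exp(τ·β_j))), the series on the left being absolutely convergent. -/
/-!
Put `Δ = |det A|` and `A* = Δ • A⁻¹`, which is integral. The slack `y = b - A x` of an integer
point of `𝒫(A, b)` splits uniquely as `y = q + Δ m` with `q ∈ [0, Δ)ⁿ` and `m ∈ ℕⁿ`, and the
residues that occur are exactly those with `b - q ∈ A ℤⁿ`. If `A x_q = b - q` then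
`x = x_q - A* m`, so `⟨c, x⟩ = ⟨c, x_q⟩ - ∑ⱼ ⟨c, h_j⟩ m_j` with every `⟨c, h_j⟩ > 0`. The series
therefore factors into a finite sum over residues times `n` geometric series of ratio
`exp(-τ ⟨c, h_j⟩)`. Since `Δ ⟨c, x_q⟩ = ⟨cᵀA*, b - q⟩`, the exponents `⟨c, x_q⟩` all lie in an
interval of length `∑ⱼ ⟨c, h_j⟩ ≤ n χ ≤ N`.
-/

open Matrix Finset Real

namespace Matrix

variable {ι : Type*} [Fintype ι] [DecidableEq ι]

theorem mulVec_mulVec_of_mul_eq_smul_one {A H : Matrix ι ι ℤ} {D : ℤ}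
    (h : A * H = D • 1) (w : ι → ℤ) : A *ᵥ (H *ᵥ w) = D • w := by
  rw [mulVec_mulVec, h, smul_mulVec, one_mulVec]

theorem mulVec_injective_of_mul_eq_smul_one {A H : Matrix ι ι ℤ} {D : ℤ}
    (h : H * A = D • 1) (hD : D ≠ 0) : Function.Injective A.mulVec := fun x y hxy => by
  have := congrArg (H *ᵥ ·) hxy
  simp only [mulVec_mulVec_of_mul_eq_smul_one h] at this
  exact smul_right_injective _ hD this

/-- The integral matrix `A* = |det A| • A⁻¹`, whose columns are the `h_i`. -/
def scaledInverse (A : Matrix ι ι ℤ) : Matrix ι ι ℤ := A.det.sign • A.adjugate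

theorem mul_scaledInverse (A : Matrix ι ι ℤ) :
    A * A.scaledInverse = (A.det.natAbs : ℤ) • 1 := by
  rw [scaledInverse, Matrix.mul_smul, mul_adjugate, smul_smul, Int.sign_mul_self_eq_natAbs]

theorem scaledInverse_mul (A : Matrix ι ι ℤ) :
    A.scaledInverse * A = (A.det.natAbs : ℤ) • 1 := by
  rw [scaledInverse, smul_mul, adjugate_mul, smul_smul, Int.sign_mul_self_eq_natAbs]

theorem cast_scaledInverse_apply (A : Matrix ι ι ℤ) (i j : ι) :
    (A.scaledInverse i j : ℚ) = A.det.natAbs * (A.map (Int.cast : ℤ → ℚ))⁻¹ i j := by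
  have hadj : (A.map (Int.cast : ℤ → ℚ)).adjugate = A.adjugate.map Int.cast :=
    ((Int.castRingHom ℚ).map_adjugate A).symm
  have hdet : (A.map (Int.cast : ℤ → ℚ)).det = A.det := ((Int.castRingHom ℚ).map_det A).symm
  have habs : (A.det.natAbs : ℚ) = A.det.sign * A.det := by
    rw [← Int.cast_natCast, ← Int.sign_mul_self_eq_natAbs, Int.cast_mul]
  rw [inv_def, hadj, hdet, Ring.inverse_eq_inv', habs, scaledInverse]
  by_cases h : A.det = 0
  · simp [h]
  · simp only [smul_apply, map_apply, smul_eq_mul, Int.cast_mul]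
    field_simp

end Matrix

theorem hasSum_prod_pow {ι : Type*} [Fintype ι] {r : ι → ℝ} (h0 : ∀ j, 0 ≤ r j)
    (h1 : ∀ j, r j < 1) : HasSum (fun m : ι → ℕ => ∏ j, r j ^ m j) (∏ j, (1 - r j)⁻¹) := by
  refine Fintype.induction_empty_option (P := fun ι _ => ∀ r : ι → ℝ, (∀ j, 0 ≤ r j) →
    (∀ j, r j < 1) → HasSum (fun m : ι → ℕ => ∏ j, r j ^ m j) (∏ j, (1 - r j)⁻¹))
    ?_ ?_ ?_ ι r h0 h1
  · intro α β _ e ih r h0 h1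
    -- the `Fintype α` instance that `ih` is about
    let _ := Fintype.ofEquiv β e.symm
    refine ((e.arrowCongr (Equiv.refl ℕ)).hasSum_iff
      (f := fun m : β → ℕ => ∏ j, r j ^ m j)).mp ?_
    convert ih (r ∘ e) (fun j => h0 _) (fun j => h1 _) using 1
    · ext m
      exact (e.prod_comp fun j => r j ^ m (e.symm j)).symm.trans (by simp)
    · exact (e.prod_comp fun j => (1 - r j)⁻¹).symm
  · intro r _ _
    simp
  · intro α _ ih r h0 h1
    have hg := hasSum_geometric_of_lt_one (h0 none) (h1 none)
    have hs := ih (fun j => r (some j)) (fun j => h0 _) (fun j => h1 _)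
    have hprod := hg.mul hs (hg.summable.mul_of_nonneg hs.summable (fun k => pow_nonneg (h0 none) k)
      fun m => prod_nonneg fun j _ => pow_nonneg (h0 _) _)
    refine (Equiv.piOptionEquivProd.symm.hasSum_iff).mp ?_
    simpa [Fintype.prod_option, Function.comp_def, mul_comm] using hprod

theorem hasSum_exp_of_equiv_prod_nat {X R ι : Type*} [Fintype R] [Fintype ι]
    (e : X ≃ R × (ι → ℕ)) {f : X → ℝ} {v : R → ℝ} {w : ι → ℝ} (hw : ∀ j, 0 < w j)
    (hf : ∀ q m, f (e.symm (q, m)) = v q - ∑ j, m j * w j) :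
    HasSum (fun x => exp (f x)) ((∑ q, exp (v q)) * ∏ j, (1 - exp (-w j))⁻¹) := by
  have hr0 : ∀ j, 0 ≤ exp (-w j) := fun j => (exp_pos _).le
  have hr1 : ∀ j, exp (-w j) < 1 := fun j => exp_lt_one_iff.mpr (neg_neg_of_pos (hw j))
  have hG := hasSum_prod_pow hr0 hr1
  have hF := hasSum_fintype fun q => exp (v q)
  have hcomp : (fun x => exp (f x)) ∘ e.symm = fun p => exp (v p.1) * ∏ j, exp (-w j) ^ p.2 j := by
    funext ⟨q, m⟩
    rw [Function.comp_apply, hf, sub_eq_add_neg, exp_add, ← sum_neg_distrib, exp_sum]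
    congr 1
    refine prod_congr rfl fun j _ => ?_
    rw [← exp_nat_mul, neg_mul_eq_mul_neg]
  refine (e.symm.hasSum_iff (f := fun x => exp (f x))).mp ?_
  rw [hcomp]
  have hs : Summable fun p : R × (ι → ℕ) => exp (v p.1) * ∏ j, exp (-w j) ^ p.2 j :=
    hF.summable.mul_of_nonneg hG.summable (fun _ => (exp_pos _).le)
      fun m => prod_nonneg fun j _ => pow_nonneg (hr0 j) _
  exact (hF.mul hG hs :)

theorem sum_comp_eq_sum_card_fiber_smul {α M : Type*} [AddCommMonoid M] {s : Finset α}
    {t : Finset ℤ} {v : α → ℤ} (h : ∀ q ∈ s, v q ∈ t) (g : ℤ → M) :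
    ∑ q ∈ s, g (v q) = ∑ i ∈ t, #{q ∈ s | v q = i} • g i := by
  rw [← sum_fiberwise_of_maps_to h]
  refine sum_congr rfl fun i _ => ?_
  rw [← sum_const]
  exact sum_congr rfl fun q hq => by rw [(mem_filter.1 hq).2]

theorem Int.sub_ediv_mem_Icc {D v B T : ℤ} (hD : 0 < D) (hlow : B - D * T ≤ D * v)
    (hup : D * v ≤ B) : v - B / D ∈ Icc (-T) 0 := by
  have hv : v ≤ B / D := (Int.le_ediv_iff_mul_le hD).2 (by linarith)
  have hBD : D * (B / D) ≤ B := Int.mul_ediv_self_le hD.ne'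
  have : B / D ≤ v + T := le_of_mul_le_mul_left (by linarith) hD
  rw [mem_Icc]
  constructor <;> linarith

section PolyhedronLattice

variable {ι : Type*} [Fintype ι] [DecidableEq ι]

open Classical in
noncomputable def latticeResidues (A : Matrix ι ι ℤ) (b : ι → ℤ) (D : ℤ) : Finset (ι → ℤ) :=
  {q ∈ Icc 0 (fun _ => D - 1) | ∃ z, A *ᵥ z = b - q}

theorem mem_latticeResidues {A : Matrix ι ι ℤ} {b q : ι → ℤ} {D : ℤ} :
    q ∈ latticeResidues A b D ↔ (∀ i, 0 ≤ q i ∧ q i < D) ∧ ∃ z, A *ᵥ z = b - q := by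
  simp only [latticeResidues, mem_filter, mem_Icc, Pi.le_def, Pi.zero_apply, Int.lt_iff_add_one_le,
    le_sub_iff_add_le, forall_and]

section

variable {A : Matrix ι ι ℤ} {b : ι → ℤ} {D : ℤ}

noncomputable def residueLift (q : latticeResidues A b D) : ι → ℤ :=
  (mem_latticeResidues.1 q.2).2.choose

theorem mulVec_residueLift (q : latticeResidues A b D) : A *ᵥ residueLift q = b - q :=
  (mem_latticeResidues.1 q.2).2.choose_spec

theorem residue_bounds (q : latticeResidues A b D) (i : ι) :
    0 ≤ (q : ι → ℤ) i ∧ (q : ι → ℤ) i < D :=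
  (mem_latticeResidues.1 q.2).1 i

end

noncomputable def polyhedronEquiv {A H : Matrix ι ι ℤ} {D : ℤ} (hAH : A * H = D • 1)
    (hHA : H * A = D • 1) (hD : 0 < D) (b : ι → ℤ) :
    {x // A *ᵥ x ≤ b} ≃ latticeResidues A b D × (ι → ℕ) where
  toFun x :=
    (⟨fun i => (b - A *ᵥ x.1) i % D, mem_latticeResidues.2
      ⟨fun i => ⟨Int.emod_nonneg _ hD.ne', Int.emod_lt_of_pos _ hD⟩,
        x.1 + H *ᵥ (fun i => (b - A *ᵥ x.1) i / D), by
          ext i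
          rw [mulVec_add, mulVec_mulVec_of_mul_eq_smul_one hAH]
          have := Int.emod_add_mul_ediv ((b - A *ᵥ x.1) i) D
          simp only [Pi.add_apply, Pi.sub_apply, Pi.smul_apply, smul_eq_mul] at this ⊢
          linarith⟩⟩,
      fun i => ((b - A *ᵥ x.1) i / D).toNat)
  invFun p := ⟨residueLift p.1 - H *ᵥ (fun i => (p.2 i : ℤ)), by
    intro i
    have := (residue_bounds p.1 i).1
    rw [mulVec_sub, mulVec_residueLift p.1, mulVec_mulVec_of_mul_eq_smul_one hAH]
    simp only [Pi.sub_apply, Pi.smul_apply, smul_eq_mul]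
    nlinarith [Int.natCast_nonneg (p.2 i)]⟩
  left_inv x := by
    refine Subtype.ext (mulVec_injective_of_mul_eq_smul_one hHA hD.ne' ?_)
    rw [mulVec_sub, mulVec_residueLift, mulVec_mulVec_of_mul_eq_smul_one hAH]
    ext i
    have hy : 0 ≤ (b - A *ᵥ x.1) i / D := Int.ediv_nonneg (sub_nonneg.2 (x.2 i)) hD.le
    have := Int.emod_add_mul_ediv ((b - A *ᵥ x.1) i) D
    simp only [Pi.sub_apply, Pi.smul_apply, smul_eq_mul] at hy this ⊢
    rw [Int.toNat_of_nonneg hy]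
    linarith
  right_inv := by
    rintro ⟨q, m⟩
    have hslack : b - A *ᵥ (residueLift q - H *ᵥ (fun i => (m i : ℤ)))
        = q + D • (fun i => (m i : ℤ)) := by
      rw [mulVec_sub, mulVec_residueLift, mulVec_mulVec_of_mul_eq_smul_one hAH]
      abel
    refine Prod.ext (Subtype.ext (funext fun i => ?_)) (funext fun i => ?_)
    all_goals
      obtain ⟨hq0, hqD⟩ := residue_bounds q i
      simp only [hslack, Pi.add_apply, Pi.smul_apply, smul_eq_mul]
    · rw [Int.add_mul_emod_self_left, Int.emod_eq_of_lt hq0 hqD]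
    · rw [Int.add_mul_ediv_left _ _ hD.ne', Int.ediv_eq_zero_of_lt hq0 hqD, zero_add,
        Int.toNat_natCast]

theorem dotProduct_polyhedronEquiv_symm {A H : Matrix ι ι ℤ} {D : ℤ} (hAH : A * H = D • 1)
    (hHA : H * A = D • 1) (hD : 0 < D) (b c : ι → ℤ) (q : latticeResidues A b D) (m : ι → ℕ) :
    c ⬝ᵥ ((polyhedronEquiv hAH hHA hD b).symm (q, m)).1
      = c ⬝ᵥ residueLift q - (c ᵥ* H) ⬝ᵥ (fun i => (m i : ℤ)) := by
  rw [← dotProduct_mulVec, ← dotProduct_sub]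
  rfl

theorem dotProduct_residueLift_sub_ediv_mem_Icc {A H : Matrix ι ι ℤ} {D : ℤ}
    (hHA : H * A = D • 1) (hD : 0 < D) {b c : ι → ℤ} (hW : ∀ j, 0 < (c ᵥ* H) j)
    (q : latticeResidues A b D) :
    c ⬝ᵥ residueLift q - (c ᵥ* H) ⬝ᵥ b / D ∈ Icc (-∑ j, (c ᵥ* H) j) 0 := by
  set W := c ᵥ* H
  have hv : D * (c ⬝ᵥ residueLift q) = W ⬝ᵥ b - W ⬝ᵥ q := by
    rw [← dotProduct_sub, ← mulVec_residueLift q, ← dotProduct_mulVec,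
      mulVec_mulVec_of_mul_eq_smul_one hHA, dotProduct_smul, smul_eq_mul]
  have hq0 : 0 ≤ W ⬝ᵥ q :=
    sum_nonneg fun i _ => mul_nonneg (hW i).le (residue_bounds q i).1
  have hqD : W ⬝ᵥ q ≤ D * ∑ j, W j := by
    rw [mul_sum]
    exact sum_le_sum fun i _ => by
      rw [mul_comm D]
      exact mul_le_mul_of_nonneg_left (residue_bounds q i).2.le (hW i).le
  exact Int.sub_ediv_mem_Icc hD (by linarith) (by linarith)

theorem exists_hasSum_exp_polyhedron {A H : Matrix ι ι ℤ} {D N : ℤ} (hAH : A * H = D • 1)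
    (hHA : H * A = D • 1) (hD : 0 < D) (b c : ι → ℤ) (hW : ∀ j, 0 < (c ᵥ* H) j)
    (hN : ∑ j, (c ᵥ* H) j ≤ N) :
    ∃ (ε : ℤ → ℕ) (α : ℤ → ℤ), ∀ τ : ℝ, 0 < τ →
      HasSum (fun x : {x // A *ᵥ x ≤ b} => exp (τ * ∑ i, (c i : ℝ) * (x.1 i : ℝ)))
        ((∑ i ∈ Icc (-N) N, (ε i : ℝ) * exp (τ * (α i : ℝ))) /
          ∏ j, (1 - exp (τ * ((-(c ᵥ* H)) j : ℝ)))) := by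
  set W := c ᵥ* H
  set V := W ⬝ᵥ b / D
  let v : latticeResidues A b D → ℤ := fun q => c ⬝ᵥ residueLift q
  have hv : ∀ q, v q - V ∈ Icc (-N) N := fun q => by
    have hq := mem_Icc.1 (dotProduct_residueLift_sub_ediv_mem_Icc hHA hD hW q)
    have hT : 0 ≤ ∑ j, W j := sum_nonneg fun j _ => (hW j).le
    rw [mem_Icc]
    constructor <;> linarith [hq.1, hq.2]
  refine ⟨fun i => #{q | v q - V = i}, fun i => V + i, fun τ hτ => ?_⟩
  have hcast : ∀ x : ι → ℤ, ∑ i, (c i : ℝ) * (x i : ℝ) = ((c ⬝ᵥ x : ℤ) : ℝ) := fun x => by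
    push_cast [dotProduct]
    rfl
  have h := hasSum_exp_of_equiv_prod_nat (polyhedronEquiv hAH hHA hD b)
    (f := fun x => τ * ∑ i, (c i : ℝ) * (x.1 i : ℝ)) (v := fun q => τ * v q)
    (w := fun j => τ * W j) (fun j => mul_pos hτ (by exact_mod_cast hW j)) fun q m => by
      rw [hcast, dotProduct_polyhedronEquiv_symm, Int.cast_sub, mul_sub]
      congr 1
      push_cast [dotProduct, mul_sum]
      exact sum_congr rfl fun j _ => by ring
  have hnum : ∑ q, exp (τ * v q)
      = ∑ i ∈ Icc (-N) N, (#{q | v q - V = i} : ℝ) * exp (τ * ((V + i : ℤ) : ℝ)) := by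
    simp_rw [← nsmul_eq_mul]
    rw [← sum_comp_eq_sum_card_fiber_smul fun q _ => hv q]
    simp
  convert h using 1
  rw [hnum, div_eq_mul_inv, ← prod_inv_distrib]
  simp only [Pi.neg_apply, Int.cast_neg, mul_neg]

end PolyhedronLattice

/-- Short exponential-form representation of the generating function of a simplicial
`Δ`-modular polyhedron `𝒫(A,b)` with `A ∈ ℤ^{n×n}`, `Δ = |det A| > 0`: with `S = P A Q`
the Smith Normal Form of `A`, `σ = S_{nn}`, `c` such that `cᵀA⁻¹ > 0` entrywise,
`h_i = Δ·A⁻¹e_i`, `χ = max_i ⟨c, h_i⟩` and `N = n·σ·χ`, there are nonnegative integers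
`ε_i`, integers `α_i` (`|i| ≤ N`) and negative integers `β_1, …, β_n` with
`Σ_{x ∈ 𝒫(A,b) ∩ ℤ^n} exp(τ⟨c,x⟩) = (Σ_{i=-N}^{N} ε_i e^{τα_i}) / (∏_j (1 - e^{τβ_j}))`
for every `τ > 0`, the left-hand series being absolutely convergent. -/
theorem simple_cone_exponential_representation
    (n : ℕ) (hn : 0 < n)
    (A P Q : Matrix (Fin n) (Fin n) ℤ) (b : Fin n → ℤ)
    (hA : A.det ≠ 0)
    (hpos : ∀ i, 0 < (P * A * Q) i i)
    (σ : ℤ) (hσ : σ = (P * A * Q) ⟨n - 1, by omega⟩ ⟨n - 1, by omega⟩)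
    (c : Fin n → ℤ)
    (hc : ∀ j : Fin n,
      0 < Matrix.vecMul (fun i => (c i : ℚ)) (A.map (Int.cast : ℤ → ℚ))⁻¹ j)
    (χ : ℤ)
    (hχ : IsGreatest
      {q : ℤ | ∃ i : Fin n, (q : ℚ) =
        ∑ j, (c j : ℚ) * ((A.det.natAbs : ℚ) * (A.map (Int.cast : ℤ → ℚ))⁻¹ j i)} χ) :
    ∃ (ε : ℤ → ℕ) (α : ℤ → ℤ) (β : Fin n → ℤ),
      (∀ j, β j < 0) ∧
      ∀ τ : ℝ, 0 < τ →
        Summable (fun x : {x : Fin n → ℤ // A.mulVec x ≤ b} =>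
          Real.exp (τ * ∑ i, (c i : ℝ) * (x.1 i : ℝ))) ∧
        (∑' x : {x : Fin n → ℤ // A.mulVec x ≤ b},
            Real.exp (τ * ∑ i, (c i : ℝ) * (x.1 i : ℝ)))
          = (∑ i ∈ Finset.Icc (-((n : ℤ) * σ * χ)) ((n : ℤ) * σ * χ),
              (ε i : ℝ) * Real.exp (τ * (α i : ℝ)))
            / ∏ j, (1 - Real.exp (τ * (β j : ℝ))) := by
  set W := c ᵥ* A.scaledInverse
  have hWq : ∀ i, (W i : ℚ) =
      ∑ j, (c j : ℚ) * ((A.det.natAbs : ℚ) * (A.map (Int.cast : ℤ → ℚ))⁻¹ j i) := fun i => by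
    simp [W, vecMul, dotProduct, cast_scaledInverse_apply]
  have hWpos : ∀ i, 0 < W i := fun i => by
    have h : (0 : ℚ) < A.det.natAbs * ((fun j => (c j : ℚ)) ᵥ* (A.map Int.cast)⁻¹) i :=
      mul_pos (by exact_mod_cast Int.natAbs_pos.2 hA) (hc i)
    rw [vecMul, dotProduct, mul_sum] at h
    exact_mod_cast (hWq i).symm ▸ h.trans_eq (sum_congr rfl fun j _ => by ring)
  have hWχ : ∀ i, W i ≤ χ := fun i => hχ.2 ⟨i, hWq i⟩
  have hχpos : 0 < χ := by
    obtain ⟨i, hi⟩ := hχ.1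
    exact (hWpos i).trans_eq (by exact_mod_cast ((hWq i).trans hi.symm))
  have hσ1 : 1 ≤ σ := hσ ▸ hpos _
  have hN : ∑ j, W j ≤ n * σ * χ := calc
    ∑ j, W j ≤ ∑ _j : Fin n, χ := sum_le_sum fun j _ => hWχ j
    _ = n * 1 * χ := by simp
    _ ≤ n * σ * χ := by gcongr
  obtain ⟨ε, α, h⟩ := exists_hasSum_exp_polyhedron A.mul_scaledInverse A.scaledInverse_mul
    (by exact_mod_cast Int.natAbs_pos.2 hA) b c hWpos hN
  exact ⟨ε, α, -W, fun j => neg_neg_of_pos (hWpos j),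
    fun τ hτ => ⟨(h τ hτ).summable, (h τ hτ).tsum_eq⟩⟩
end
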